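/- Let H : ℂ² → ℂ² be the polynomial map H(z₁,z₂) = (z₁⁶ + (44/31)z₂³ − z₂, z₂⁶ + (44/31)z₁³ − z₁). For z = (z₁,z₂) ∈ ℂ², let M(z) be the 2×2 matrix [[6z₁⁵, (132/31)z₂² − 1], [(132/31)z₁² − 1, 6z₂⁵]] (which is the Jacobian of H at z), and for k ∈ {2,…,6} let M_k(z) be the 2×2 matrix whose (1,1) entry is C(6,k)·z₁^{6−k}, (1,2) entry is (44/31)·C(3,k)·z₂^{3−k}, (2,1) entry is (44/31)·C(3,k)·z₁^{3−k}, and (2,2) entry is C(6,k)·z₂^{6−k}, where C(j,k) is the binomial coefficient and any entry whose binomial coefficient is zero is defined to be 0. Suppose M(z) is invertible and for all k ∈ {2,…,6}, σ(M(z)⁻¹·M_k(z)) < (0.03/‖M(z)⁻¹·H(z)‖)^{k−1}, where σ denotes the largest singular value (the ℓ² operator norm) and ‖·‖ is the Hermitian norm on ℂ². Then α(H,z) < 0.03. -/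

import Mathlib

/-!
`H` is separable: its `t`-th coordinate is `∑ⱼ p_{tj}(zⱼ)` for univariate polynomials `p_{tj}`.
Hence `D^k H(z)(v₁, …, v_k) = k! · M_k(z) w` with `wⱼ = ∏ᵢ (vᵢ)ⱼ`, and `‖w‖ ≤ ∏ᵢ ‖vᵢ‖`, so the
`k`-th term of `γ(H, z)` is at most `σ(M(z)⁻¹ M_k(z))^{1/(k-1)} < 0.03 / β(H, z)`. Since
`deg H = 6` only the terms `2 ≤ k ≤ 6` are nonzero, so the supremum is a maximum and the
inequality stays strict.
-/

noncomputable section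

open Set

/-- `ℂⁿ` with the Hermitian (Euclidean) norm. -/
abbrev ECn (n : ℕ) := EuclideanSpace ℂ (Fin n)

/-- Smale's invariant `β(F, z) = ‖DF(z)⁻¹ F(z)‖` (using the convention that the
inverse of a non-invertible continuous linear map is `0`). -/
def betaInv {n : ℕ} (F : ECn n → ECn n) (z : ECn n) : ℝ :=
  ‖(fderiv ℂ F z).inverse (F z)‖

/-- Smale's invariant
`γ(F, z) = sup_{k ≥ 2} ‖DF(z)⁻¹ ∘ (1/k!)·D^k F(z)‖^{1/(k−1)}`, where `D^k F(z)`
is the `k`-th derivative of `F` at `z` as a continuous multilinear map and the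
norms are multilinear operator norms. -/
def gammaInv {n : ℕ} (F : ECn n → ECn n) (z : ECn n) : ℝ :=
  ⨆ k : ℕ, if 2 ≤ k then
      (((k.factorial : ℝ))⁻¹ *
          ‖(fderiv ℂ F z).inverse.compContinuousMultilinearMap
              (iteratedFDeriv ℂ k F z)‖) ^ ((1 : ℝ) / ((k : ℝ) - 1))
    else 0

/-- Smale's invariant `α(F, z) = β(F, z) · γ(F, z)`. -/
def alphaInv {n : ℕ} (F : ECn n → ECn n) (z : ECn n) : ℝ :=
  betaInv F z * gammaInv F z

/-- The Newton endomorphism `N_F(z) = z − DF(z)⁻¹ F(z)`. -/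
def newtonMap {n : ℕ} (F : ECn n → ECn n) (z : ECn n) : ECn n :=
  z - (fderiv ℂ F z).inverse (F z)

/-- `ζ` witnesses that `z₀` is an approximate root of `F`: `ζ` is a
nondegenerate root of `F`, the Newton iterates of `z₀` are all defined (the
derivative of `F` is invertible along them), and they converge to `ζ`
quadratically: `‖ζ − z_m‖ ≤ (1/2)^{2^{m−1}} ‖ζ − z₀‖` for all `m ≥ 1`. -/
def NewtonWitness {n : ℕ} (F : ECn n → ECn n) (z₀ ζ : ECn n) : Prop :=
  F ζ = 0 ∧ IsUnit (fderiv ℂ F ζ) ∧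
  (∀ m : ℕ, IsUnit (fderiv ℂ F ((newtonMap F)^[m] z₀))) ∧
  ∀ m : ℕ, 1 ≤ m →
    ‖ζ - (newtonMap F)^[m] z₀‖ ≤ (1 / 2 : ℝ) ^ (2 ^ (m - 1)) * ‖ζ - z₀‖

/-- `z₀` is an approximate root of `F`. -/
def IsApproximateRoot {n : ℕ} (F : ECn n → ECn n) (z₀ : ECn n) : Prop :=
  ∃ ζ, NewtonWitness F z₀ ζ

/-- The polynomial map `H(z₁,z₂) = (z₁⁶ + (44/31)z₂³ − z₂, z₂⁶ + (44/31)z₁³ − z₁)`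
on `ℂ²`. -/
def Hmap (z : ECn 2) : ECn 2 :=
  (WithLp.equiv 2 (Fin 2 → ℂ)).symm
    ![z 0 ^ 6 + (44 / 31) * z 1 ^ 3 - z 1, z 1 ^ 6 + (44 / 31) * z 0 ^ 3 - z 0]

/-- The Jacobian matrix `M(z)` of `H` at `z`. -/
def Mmat (z : ECn 2) : Matrix (Fin 2) (Fin 2) ℂ :=
  !![6 * z 0 ^ 5, (132 / 31) * z 1 ^ 2 - 1;
     (132 / 31) * z 0 ^ 2 - 1, 6 * z 1 ^ 5]

/-- The matrix `M_k(z)` of scaled `k`-th order partial derivatives of `H` at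
`z` (entries with vanishing binomial coefficient are `0`). -/
def Mkmat (k : ℕ) (z : ECn 2) : Matrix (Fin 2) (Fin 2) ℂ :=
  !![(Nat.choose 6 k : ℂ) * z 0 ^ (6 - k),
       (44 / 31) * (Nat.choose 3 k : ℂ) * z 1 ^ (3 - k);
     (44 / 31) * (Nat.choose 3 k : ℂ) * z 0 ^ (3 - k),
       (Nat.choose 6 k : ℂ) * z 1 ^ (6 - k)]

/-- The largest singular value of a `2 × 2` complex matrix, i.e. its `ℓ²`
operator norm. -/
def sigmaMax (M : Matrix (Fin 2) (Fin 2) ℂ) : ℝ :=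
  ‖LinearMap.toContinuousLinearMap (Matrix.toEuclideanLin M)‖

section

variable {𝕜 : Type*} [RCLike 𝕜]

theorem iteratedFDeriv_comp_strongDual_apply {E F : Type*} [NormedAddCommGroup E]
    [NormedSpace 𝕜 E] [NormedAddCommGroup F] [NormedSpace 𝕜 F] {k : ℕ} {f : 𝕜 → F}
    (hf : ContDiff 𝕜 k f) (ℓ : StrongDual 𝕜 E) (z : E) (v : Fin k → E) :
    iteratedFDeriv 𝕜 k (f ∘ ℓ) z v = (∏ i, ℓ (v i)) • iteratedDeriv k f (ℓ z) := by
  rw [ℓ.iteratedFDeriv_comp_right hf z le_rfl,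
    ContinuousMultilinearMap.compContinuousLinearMap_apply,
    iteratedFDeriv_apply_eq_iteratedDeriv_mul_prod]

variable {ι : Type*} [Fintype ι]

theorem EuclideanSpace.norm_le_norm_of_forall_norm_apply_le {x y : EuclideanSpace 𝕜 ι}
    (h : ∀ j, ‖x j‖ ≤ ‖y j‖) : ‖x‖ ≤ ‖y‖ := by
  rw [EuclideanSpace.norm_eq, EuclideanSpace.norm_eq]
  gcongr with j
  exact h j

theorem EuclideanSpace.norm_toLp_prod_le {k : ℕ} (hk : 0 < k) (v : Fin k → EuclideanSpace 𝕜 ι) :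
    ‖WithLp.toLp 2 (fun j => ∏ i, v i j)‖ ≤ ∏ i, ‖v i‖ := by
  obtain ⟨m, rfl⟩ := Nat.exists_eq_add_one_of_ne_zero hk.ne'
  rw [Fin.prod_univ_succ, mul_comm, ← norm_smul_of_nonneg (by positivity)]
  refine norm_le_norm_of_forall_norm_apply_le fun j => ?_
  simp only [Fin.prod_univ_succ, norm_mul, PiLp.smul_apply, norm_smul, norm_prod, norm_norm]
  rw [mul_comm]
  gcongr with i
  exact PiLp.norm_apply_le _ _

variable [DecidableEq ι]

theorem iteratedFDeriv_separable_apply {k : ℕ} (p : ι → ι → 𝕜 → 𝕜)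
    (hp : ∀ t j, ContDiff 𝕜 k (p t j)) (z : EuclideanSpace 𝕜 ι)
    (v : Fin k → EuclideanSpace 𝕜 ι) :
    iteratedFDeriv 𝕜 k (fun z : EuclideanSpace 𝕜 ι => WithLp.toLp 2 fun t => ∑ j, p t j (z j))
        z v =
      Matrix.toEuclideanCLM (𝕜 := 𝕜) (Matrix.of fun t j => iteratedDeriv k (p t j) (z j))
        (WithLp.toLp 2 fun j => ∏ i, v i j) := by
  set F := fun z : EuclideanSpace 𝕜 ι => WithLp.toLp 2 fun t => ∑ j, p t j (z j)
  have hcomp : ∀ t j, ContDiff 𝕜 k (p t j ∘ EuclideanSpace.proj (𝕜 := 𝕜) j) := fun t j =>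
    (hp t j).comp (EuclideanSpace.proj j : EuclideanSpace 𝕜 ι →L[𝕜] 𝕜).contDiff
  have hF : ContDiff 𝕜 k F :=
    (contDiff_piLp 2).mpr fun t => by simpa using ContDiff.sum fun j _ => hcomp t j
  ext t
  have hcoord : EuclideanSpace.proj t ∘ F = ∑ j, p t j ∘ EuclideanSpace.proj j := by
    ext z
    simp [F]
  calc (iteratedFDeriv 𝕜 k F z v) t
      = iteratedFDeriv 𝕜 k (EuclideanSpace.proj t ∘ F) z v := by
        rw [(EuclideanSpace.proj t).iteratedFDeriv_comp_left hF.contDiffAt le_rfl]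
        rfl
    _ = ∑ j, (∏ i, v i j) * iteratedDeriv k (p t j) (z j) := by
        rw [hcoord, iteratedFDeriv_sum_apply fun j _ => (hcomp t j).contDiffAt, sum_apply]
        simp only [iteratedFDeriv_comp_strongDual_apply (hp _ _), PiLp.proj_apply, smul_eq_mul]
    _ = _ := by simp [Matrix.mulVec, dotProduct, mul_comm]

theorem Matrix.inverse_toEuclideanCLM {A : Matrix ι ι 𝕜} (hA : IsUnit A) :
    (Matrix.toEuclideanCLM (𝕜 := 𝕜) A).inverse = Matrix.toEuclideanCLM (𝕜 := 𝕜) A⁻¹ := by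
  rw [← ContinuousLinearMap.ringInverse_eq_inverse, ← mul_one (Ring.inverse _),
    Ring.inverse_mul_eq_iff_eq_mul _ _ _ (hA.map _), ← map_mul,
    Matrix.mul_nonsing_inv _ ((Matrix.isUnit_iff_isUnit_det A).mp hA), map_one]

end

theorem rpow_one_div_lt_of_lt_pow {a r : ℝ} {k : ℕ} (ha : 0 ≤ a) (hr : 0 ≤ r) (hk : 2 ≤ k)
    (h : a < r ^ (k - 1)) : a ^ ((1 : ℝ) / ((k : ℝ) - 1)) < r := by
  have hk_cast : ((k - 1 : ℕ) : ℝ) = (k : ℝ) - 1 := by rw [Nat.cast_sub (by omega), Nat.cast_one]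
  have hk_pos : (0 : ℝ) < (k : ℝ) - 1 := by
    rw [← hk_cast]
    exact_mod_cast (by omega : 0 < k - 1)
  rwa [one_div, Real.rpow_inv_lt_iff_of_pos ha hr hk_pos, ← hk_cast, Real.rpow_natCast]

theorem gammaInv_lt {n : ℕ} {F : ECn n → ECn n} {z : ECn n} {r : ℝ} (hr : 0 ≤ r) {N : ℕ}
    (hN : 2 ≤ N)
    (hlt : ∀ k, 2 ≤ k → k ≤ N → (k.factorial : ℝ)⁻¹ *
      ‖(fderiv ℂ F z).inverse.compContinuousMultilinearMap (iteratedFDeriv ℂ k F z)‖ < r ^ (k - 1))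
    (hvanish : ∀ k, N < k → iteratedFDeriv ℂ k F z = 0) :
    gammaInv F z < r := by
  set g : ℕ → ℝ := fun k => ((k.factorial : ℝ)⁻¹ *
    ‖(fderiv ℂ F z).inverse.compContinuousMultilinearMap (iteratedFDeriv ℂ k F z)‖) ^
      ((1 : ℝ) / ((k : ℝ) - 1))
  set m := (Finset.Icc 2 N).sup' ⟨2, by simp [hN]⟩ g
  have hm : 0 ≤ m := (by positivity : 0 ≤ g 2).trans (Finset.le_sup' g (by simp [hN]))
  have hgamma : gammaInv F z ≤ m := by
    refine ciSup_le fun k => ?_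
    split_ifs with hk
    · rcases le_or_gt k N with hkN | hkN
      · exact Finset.le_sup' g (by simp [hk, hkN])
      · have hk2 : (2 : ℝ) ≤ k := by exact_mod_cast hk
        have hk1 : (1 : ℝ) / ((k : ℝ) - 1) ≠ 0 := one_div_ne_zero (by linarith)
        have hzero : (fderiv ℂ F z).inverse.compContinuousMultilinearMap
            (iteratedFDeriv ℂ k F z) = 0 := by
          ext v
          simp [hvanish k hkN]
        rw [hzero, norm_zero, mul_zero, Real.zero_rpow hk1]
        exact hm
    · exact hm
  refine hgamma.trans_lt ((Finset.sup'_lt_iff _).mpr fun k hk => ?_)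
  rw [Finset.mem_Icc] at hk
  exact rpow_one_div_lt_of_lt_pow (by positivity) hr hk.1 (hlt k hk.1 hk.2)

-- `x ^ 1` rather than `x`, so that `iteratedDeriv_pow` computes every term.
def Hpoly (t j : Fin 2) (x : ℂ) : ℂ :=
  if t = j then x ^ 6 else 44 / 31 * x ^ 3 - x ^ 1

theorem Hmap_eq_separable :
    Hmap = fun z => WithLp.toLp 2 fun t => ∑ j, Hpoly t j (z j) := by
  ext z t
  fin_cases t <;> simp [Hmap, Hpoly, Fin.sum_univ_two] <;> ring

theorem contDiff_Hpoly (n : WithTop ℕ∞) (t j : Fin 2) : ContDiff ℂ n (Hpoly t j) := by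
  unfold Hpoly
  split_ifs <;> fun_prop

theorem iteratedDeriv_Hpoly (k : ℕ) (t j : Fin 2) (x : ℂ) :
    iteratedDeriv k (Hpoly t j) x =
      if t = j then (Nat.descFactorial 6 k : ℂ) * x ^ (6 - k)
      else 44 / 31 * ((Nat.descFactorial 3 k : ℂ) * x ^ (3 - k)) -
        Nat.descFactorial 1 k * x ^ (1 - k) := by
  by_cases h : t = j
  · rw [show Hpoly t j = (· ^ 6) from funext fun x => if_pos h, iteratedDeriv_pow, if_pos h]
  · rw [show Hpoly t j = fun x => 44 / 31 * x ^ 3 - x ^ 1 from funext fun x => if_neg h,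
      iteratedDeriv_fun_sub (by fun_prop) (by fun_prop), iteratedDeriv_const_mul_field,
      iteratedDeriv_pow, iteratedDeriv_pow, if_neg h]

theorem Mmat_eq_iteratedDeriv_Hpoly (z : ECn 2) :
    Mmat z = Matrix.of fun t j => iteratedDeriv 1 (Hpoly t j) (z j) := by
  ext t j
  fin_cases t <;> fin_cases j <;> simp [Mmat, iteratedDeriv_Hpoly] <;> ring

theorem factorial_smul_Mkmat {k : ℕ} (hk : 2 ≤ k) (z : ECn 2) :
    (k.factorial : ℂ) • Mkmat k z = Matrix.of fun t j => iteratedDeriv k (Hpoly t j) (z j) := by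
  have h1 : Nat.descFactorial 1 k = 0 := Nat.descFactorial_eq_zero_iff_lt.2 (by omega)
  ext t j
  fin_cases t <;> fin_cases j <;>
    simp [Mkmat, iteratedDeriv_Hpoly, h1, Nat.descFactorial_eq_factorial_mul_choose] <;> ring

theorem Mkmat_eq_zero {k : ℕ} (hk : 7 ≤ k) (z : ECn 2) : Mkmat k z = 0 := by
  ext t j
  fin_cases t <;> fin_cases j <;>
    simp [Mkmat, Nat.choose_eq_zero_of_lt (by omega : 6 < k),
      Nat.choose_eq_zero_of_lt (by omega : 3 < k)]

theorem iteratedFDeriv_Hmap_apply (k : ℕ) (z : ECn 2) (v : Fin k → ECn 2) :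
    iteratedFDeriv ℂ k Hmap z v =
      Matrix.toEuclideanCLM (𝕜 := ℂ) (Matrix.of fun t j => iteratedDeriv k (Hpoly t j) (z j))
        (WithLp.toLp 2 fun j => ∏ i, v i j) := by
  rw [Hmap_eq_separable]
  exact iteratedFDeriv_separable_apply _ (fun t j => contDiff_Hpoly _ t j) z v

theorem fderiv_Hmap (z : ECn 2) :
    fderiv ℂ Hmap z = Matrix.toEuclideanCLM (𝕜 := ℂ) (Mmat z) := by
  ext1 u
  have h := iteratedFDeriv_Hmap_apply 1 z fun _ => u
  rw [iteratedFDeriv_one_apply] at h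
  rw [h, Mmat_eq_iteratedDeriv_Hpoly]
  simp

theorem iteratedFDeriv_Hmap_eq_zero {k : ℕ} (hk : 7 ≤ k) (z : ECn 2) :
    iteratedFDeriv ℂ k Hmap z = 0 := by
  ext v
  rw [iteratedFDeriv_Hmap_apply, ← factorial_smul_Mkmat (by omega), Mkmat_eq_zero hk]
  simp

theorem sigmaMax_eq_norm_toEuclideanCLM (N : Matrix (Fin 2) (Fin 2) ℂ) :
    sigmaMax N = ‖Matrix.toEuclideanCLM (𝕜 := ℂ) N‖ := rfl

theorem norm_inverse_comp_iteratedFDeriv_Hmap_le {z : ECn 2} (hM : IsUnit (Mmat z)) {k : ℕ}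
    (hk : 2 ≤ k) :
    (k.factorial : ℝ)⁻¹ *
        ‖(fderiv ℂ Hmap z).inverse.compContinuousMultilinearMap (iteratedFDeriv ℂ k Hmap z)‖ ≤
      sigmaMax ((Mmat z)⁻¹ * Mkmat k z) := by
  rw [inv_mul_le_iff₀ (by positivity), sigmaMax_eq_norm_toEuclideanCLM]
  refine ContinuousMultilinearMap.opNorm_le_bound (by positivity) fun v => ?_
  set A := Matrix.toEuclideanCLM (𝕜 := ℂ) ((Mmat z)⁻¹ * Mkmat k z) with hA
  set w : ECn 2 := WithLp.toLp 2 fun j => ∏ i, v i j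
  have happly : (fderiv ℂ Hmap z).inverse.compContinuousMultilinearMap
      (iteratedFDeriv ℂ k Hmap z) v = (k.factorial : ℂ) • A w := by
    rw [ContinuousLinearMap.compContinuousMultilinearMap_coe, Function.comp_apply, fderiv_Hmap,
      Matrix.inverse_toEuclideanCLM hM, iteratedFDeriv_Hmap_apply, ← factorial_smul_Mkmat hk,
      map_smul, smul_apply, map_smul, hA, map_mul, mul_apply_eq_comp]
  rw [happly]
  calc ‖(k.factorial : ℂ) • A w‖ = k.factorial * ‖A w‖ := by
        rw [norm_smul, Complex.norm_natCast]
    _ ≤ k.factorial * (‖A‖ * ∏ i, ‖v i‖) := by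
        gcongr
        exact A.le_opNorm_of_le (EuclideanSpace.norm_toLp_prod_le (by omega) v)
    _ = _ := by ring

/-- Sufficient criterion for `α(H, z) < 0.03` in terms of the matrices `M(z)`
and `M_k(z)`. -/
theorem haas_alpha_criterion (z : ECn 2) (hM : IsUnit (Mmat z))
    (hσ : ∀ k : ℕ, 2 ≤ k → k ≤ 6 →
      sigmaMax ((Mmat z)⁻¹ * Mkmat k z) <
        (0.03 / ‖(WithLp.equiv 2 (Fin 2 → ℂ)).symm
            ((Mmat z)⁻¹.mulVec fun i => Hmap z i)‖) ^ (k - 1)) :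
    alphaInv Hmap z < 0.03 := by
  set β := ‖(WithLp.equiv 2 (Fin 2 → ℂ)).symm ((Mmat z)⁻¹.mulVec fun i => Hmap z i)‖
  have hβ : betaInv Hmap z = β := by
    rw [betaInv, fderiv_Hmap, Matrix.inverse_toEuclideanCLM hM]
    rfl
  -- `β = 0` would make the bound in `hσ 2` equal to `0.03 / 0 = 0`.
  have hβ_pos : 0 < β := by
    by_contra! h
    have h2 := hσ 2 le_rfl (by norm_num)
    rw [le_antisymm h (norm_nonneg _), div_zero, pow_one, sigmaMax_eq_norm_toEuclideanCLM] at h2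
    exact (norm_nonneg _).not_gt h2
  have hγ : gammaInv Hmap z < 0.03 / β :=
    gammaInv_lt (by positivity) (by norm_num : 2 ≤ 6)
      (fun k hk2 hk6 =>
        (norm_inverse_comp_iteratedFDeriv_Hmap_le hM hk2).trans_lt (hσ k hk2 hk6))
      (fun k hk => iteratedFDeriv_Hmap_eq_zero hk z)
  calc alphaInv Hmap z = β * gammaInv Hmap z := by rw [alphaInv, hβ]
    _ < β * (0.03 / β) := by gcongr
    _ = 0.03 := mul_div_cancel₀ _ hβ_pos.ne'
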